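/- An instance of the complete and strict 2-weighted popular matching problem has a well-formed matching if and only if its fs-relation graph admits an orientation of its edges such that: (a) every vertex has at most one incoming edge in E1 ∪ E2; (b) every item p ∈ F1 has exactly one incoming edge belonging to E1; and (c) every item q ∈ F2 has exactly one incoming edge belonging to E2. -/

import Mathlib

/-! A matching `M` and an orientation are the same data once the edge `e_a` is directed toward
`M a`: conditions (1), (2) say that each edge points at one of its endpoints, and injectivity of
`M` is (a). Since `s1 x ∉ F1` and `s2 y ∉ F2`, an `E1`-edge directed into `p ∈ F1` points at its
`f1`-end (likewise for `E2` and `F2`), so (3), (4) become (b), (c). -/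

open scoped Classical
open Finset

noncomputable section

/-- An instance of the complete and strict 2-weighted popular matching problem:
applicants `A` partitioned into categories `A1` (weight `w1`) and `A2` (weight `w2`),
items `I` with `|A| < |I|`, and for each applicant a strict complete preference list
encoded by an injective ranking function (smaller rank = more preferred). -/
structure TwoWPM (A I : Type) [Fintype A] [DecidableEq A] [Fintype I] [DecidableEq I] where
  A1 : Finset A
  A2 : Finset A
  union_eq : A1 ∪ A2 = Finset.univ
  disj : Disjoint A1 A2
  w1 : ℝ
  w2 : ℝ
  hw12 : w2 < w1
  hw2 : 0 < w2
  rank : A → I → ℕ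
  rank_inj : ∀ x : A, Function.Injective (rank x)
  card_lt : Fintype.card A < Fintype.card I

namespace TwoWPM

variable {A I : Type} [Fintype A] [DecidableEq A] [Fintype I] [DecidableEq I]
variable (P : TwoWPM A I)

/-- applicant `x` prefers item `p` to item `q`. -/
def Prefers (x : A) (p q : I) : Prop := P.rank x p < P.rank x q

/-- the most preferred item of applicant `x` within the set `s` (junk value if `s = ∅`). -/
def bestIn (x : A) (s : Finset I) : I :=
  if hs : s.Nonempty then (Finset.exists_min_image s (P.rank x) hs).choose
  else (Fintype.card_pos_iff.mp (Nat.lt_of_le_of_lt (Nat.zero_le _) P.card_lt)).some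

/-- the first item of an applicant of the first category. -/
def f1 (x : A) : I := P.bestIn x Finset.univ
/-- the set of `f1`-items. -/
def F1 : Finset I := P.A1.image P.f1
/-- the second item of an applicant of the first category. -/
def s1 (x : A) : I := P.bestIn x (Finset.univ \ P.F1)
/-- the set of `s1`-items. -/
def S1 : Finset I := P.A1.image P.s1
/-- the first item of an applicant of the second category. -/
def f2 (y : A) : I := P.bestIn y (Finset.univ \ P.F1)
/-- the set of `f2`-items. -/
def F2 : Finset I := P.A2.image P.f2
/-- the second item of an applicant of the second category. -/
def s2 (y : A) : I := P.bestIn y (Finset.univ \ (P.F1 ∪ P.F2))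
/-- the set of `s2`-items. -/
def S2 : Finset I := P.A2.image P.s2

/-- the weight of an applicant. -/
def weight (x : A) : ℝ := if x ∈ P.A1 then P.w1 else P.w2

/-- `M` is more popular than `M'`: the total weight of applicants preferring `M`
exceeds the total weight of applicants preferring `M'`. -/
def MorePopular (M M' : A → I) : Prop :=
  (∑ x : A, if P.Prefers x (M' x) (M x) then P.weight x else 0) <
    ∑ x : A, if P.Prefers x (M x) (M' x) then P.weight x else 0

/-- `M` is a 2-weighted popular matching. -/
def IsPopular (M : A → I) : Prop :=
  Function.Injective M ∧ ∀ M' : A → I, Function.Injective M' → ¬ P.MorePopular M' M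

/-- `M` is a well-formed matching. -/
def IsWellFormed (M : A → I) : Prop :=
  Function.Injective M ∧
  (∀ x ∈ P.A1, M x = P.f1 x ∨ M x = P.s1 x) ∧
  (∀ y ∈ P.A2, M y = P.f2 y ∨ M y = P.s2 y) ∧
  (∀ p ∈ P.F1, ∃ x ∈ P.A1, P.f1 x = p ∧ M x = p) ∧
  (∀ q ∈ P.F2, ∃ y ∈ P.A2, P.f2 y = q ∧ M y = q)

/-- the instance has a 2-weighted popular matching. -/
def HasPopular : Prop := ∃ M : A → I, P.IsPopular M

/-- the instance has a well-formed matching. -/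
def HasWellFormed : Prop := ∃ M : A → I, P.IsWellFormed M

/-- the `f`-endpoint of the fs-relation-graph edge associated with applicant `a`. -/
def fEnd (a : A) : I := if a ∈ P.A1 then P.f1 a else P.f2 a
/-- the `s`-endpoint of the fs-relation-graph edge associated with applicant `a`. -/
def sEnd (a : A) : I := if a ∈ P.A1 then P.s1 a else P.s2 a

/-- the edge of applicant `a` joins items `p` and `q` in the fs-relation graph. -/
def EdgeJoins (a : A) (p q : I) : Prop :=
  (P.fEnd a = p ∧ P.sEnd a = q) ∨ (P.fEnd a = q ∧ P.sEnd a = p)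

/-- adjacency in the fs-relation graph. -/
def Adj (p q : I) : Prop := ∃ a : A, P.EdgeJoins a p q

/-- a simple path in the fs-relation graph with `k` (distinct) vertices
`v 0, …, v (k-1)` and edges `e 0, …, e (k-2)`, edge `e i` joining `v i` and `v (i+1)`. -/
def IsPath (k : ℕ) (v : ℕ → I) (e : ℕ → A) : Prop :=
  (∀ i j, i < k → j < k → v i = v j → i = j) ∧
  (∀ i, i + 1 < k → P.EdgeJoins (e i) (v i) (v (i + 1)))

/-- a simple cycle in the fs-relation graph with `ℓ ≥ 2` distinct vertices and
`ℓ` distinct edges. -/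
def IsCycle (ℓ : ℕ) (u : ℕ → I) (c : ℕ → A) : Prop :=
  2 ≤ ℓ ∧
  (∀ i j, i < ℓ → j < ℓ → u i = u j → i = j) ∧
  (∀ i j, i < ℓ → j < ℓ → c i = c j → i = j) ∧
  (∀ i, i < ℓ → P.EdgeJoins (c i) (u i) (u ((i + 1) % ℓ)))

/-- a bad subgraph of type `G1`: a simple path on `k ≥ 4` vertices whose first and
last edges belong to `E2`, whose second and second-to-last edges belong to `E1`,
and whose second and second-to-last vertices lie in `S1 ∩ F2`. -/
def HasBadG1 : Prop :=
  ∃ (k : ℕ) (v : ℕ → I) (e : ℕ → A),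
    4 ≤ k ∧ P.IsPath k v e ∧
    e 0 ∈ P.A2 ∧ e 1 ∈ P.A1 ∧ e (k - 2) ∈ P.A2 ∧ e (k - 3) ∈ P.A1 ∧
    v 1 ∈ P.S1 ∧ v 1 ∈ P.F2 ∧ v (k - 2) ∈ P.S1 ∧ v (k - 2) ∈ P.F2

/-- a bad subgraph of type `G2`: a simple cycle together with a simple path on
`k ≥ 3` vertices meeting the cycle exactly in its last vertex, whose first edge is
in `E2`, second edge in `E1`, and second vertex in `S1 ∩ F2`. -/
def HasBadG2 : Prop :=
  ∃ (ℓ : ℕ) (u : ℕ → I) (c : ℕ → A) (k : ℕ) (v : ℕ → I) (e : ℕ → A),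
    P.IsCycle ℓ u c ∧ 3 ≤ k ∧ P.IsPath k v e ∧
    (∃ j, j < ℓ ∧ u j = v (k - 1)) ∧
    (∀ i, i < k - 1 → ∀ j, j < ℓ → v i ≠ u j) ∧
    e 0 ∈ P.A2 ∧ e 1 ∈ P.A1 ∧ v 1 ∈ P.S1 ∧ v 1 ∈ P.F2

/-- a bad subgraph of type `G3`: two distinct cycles lying in the same connected
component of the fs-relation graph. -/
def HasBadG3 : Prop :=
  ∃ (ℓ : ℕ) (u : ℕ → I) (c : ℕ → A) (ℓ' : ℕ) (u' : ℕ → I) (c' : ℕ → A),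
    P.IsCycle ℓ u c ∧ P.IsCycle ℓ' u' c' ∧
    {a : A | ∃ i, i < ℓ ∧ c i = a} ≠ {a : A | ∃ i, i < ℓ' ∧ c' i = a} ∧
    Relation.ReflTransGen P.Adj (u 0) (u' 0)

lemma bestIn_mem (x : A) {s : Finset I} (hs : s.Nonempty) : P.bestIn x s ∈ s := by
  rw [bestIn, dif_pos hs]
  exact (exists_min_image s (P.rank x) hs).choose_spec.1

lemma card_F1_union_F2_lt : #(P.F1 ∪ P.F2) < #(univ : Finset I) :=
  calc #(P.F1 ∪ P.F2) ≤ #P.A1 + #P.A2 :=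
        (card_union_le _ _).trans (Nat.add_le_add card_image_le card_image_le)
    _ = Fintype.card A := by rw [← card_union_of_disjoint P.disj, P.union_eq, card_univ]
    _ < #univ := by rw [card_univ]; exact P.card_lt

lemma s1_notMem_F1 (x : A) : P.s1 x ∉ P.F1 :=
  have hF1 : #P.F1 < #(univ : Finset I) :=
    (card_le_card subset_union_left).trans_lt P.card_F1_union_F2_lt
  (mem_sdiff.mp (P.bestIn_mem x (sdiff_nonempty_of_card_lt_card hF1))).2

lemma s2_notMem_F2 (y : A) : P.s2 y ∉ P.F2 := fun hF2 =>
  (mem_sdiff.mp (P.bestIn_mem y (sdiff_nonempty_of_card_lt_card P.card_F1_union_F2_lt))).2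
    (mem_union_right _ hF2)

lemma mem_A1_or_mem_A2 (a : A) : a ∈ P.A1 ∨ a ∈ P.A2 :=
  mem_union.mp (P.union_eq ▸ mem_univ a)

lemma eq_endpoint_iff_of_mem_A1 {x : A} (hx : x ∈ P.A1) (i : I) :
    (i = P.fEnd x ∨ i = P.sEnd x) ↔ (i = P.f1 x ∨ i = P.s1 x) := by
  simp only [fEnd, sEnd, if_pos hx]

lemma eq_endpoint_iff_of_mem_A2 {y : A} (hy : y ∈ P.A2) (i : I) :
    (i = P.fEnd y ∨ i = P.sEnd y) ↔ (i = P.f2 y ∨ i = P.s2 y) := by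
  simp only [fEnd, sEnd, if_neg (disjoint_right.mp P.disj hy)]

lemma forall_eq_endpoint_iff (M : A → I) :
    (∀ a, M a = P.fEnd a ∨ M a = P.sEnd a) ↔
      (∀ x ∈ P.A1, M x = P.f1 x ∨ M x = P.s1 x) ∧
        (∀ y ∈ P.A2, M y = P.f2 y ∨ M y = P.s2 y) := by
  refine ⟨fun h => ⟨fun x hx => (P.eq_endpoint_iff_of_mem_A1 hx _).mp (h x),
    fun y hy => (P.eq_endpoint_iff_of_mem_A2 hy _).mp (h y)⟩, fun ⟨h1, h2⟩ a => ?_⟩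
  rcases P.mem_A1_or_mem_A2 a with ha | ha
  · exact (P.eq_endpoint_iff_of_mem_A1 ha _).mpr (h1 a ha)
  · exact (P.eq_endpoint_iff_of_mem_A2 ha _).mpr (h2 a ha)

lemma covers_F1_iff {M : A → I} (hM : Function.Injective M)
    (hA1 : ∀ x ∈ P.A1, M x = P.f1 x ∨ M x = P.s1 x) :
    (∀ p ∈ P.F1, ∃ x ∈ P.A1, P.f1 x = p ∧ M x = p) ↔
      ∀ p ∈ P.F1, ∃! x, x ∈ P.A1 ∧ M x = p := by
  refine forall₂_congr fun p hp => ⟨?_, ?_⟩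
  · rintro ⟨x, hx, -, hMx⟩
    exact ⟨x, ⟨hx, hMx⟩, fun x' ⟨_, hMx'⟩ => hM (hMx'.trans hMx.symm)⟩
  · rintro ⟨x, ⟨hx, rfl⟩, -⟩
    refine ⟨x, hx, ?_, rfl⟩
    exact ((hA1 x hx).resolve_right fun hs => P.s1_notMem_F1 x (hs ▸ hp)).symm

lemma covers_F2_iff {M : A → I} (hM : Function.Injective M)
    (hA2 : ∀ y ∈ P.A2, M y = P.f2 y ∨ M y = P.s2 y) :
    (∀ q ∈ P.F2, ∃ y ∈ P.A2, P.f2 y = q ∧ M y = q) ↔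
      ∀ q ∈ P.F2, ∃! y, y ∈ P.A2 ∧ M y = q := by
  refine forall₂_congr fun q hq => ⟨?_, ?_⟩
  · rintro ⟨y, hy, -, hMy⟩
    exact ⟨y, ⟨hy, hMy⟩, fun y' ⟨_, hMy'⟩ => hM (hMy'.trans hMy.symm)⟩
  · rintro ⟨y, ⟨hy, rfl⟩, -⟩
    refine ⟨y, hy, ?_, rfl⟩
    exact ((hA2 y hy).resolve_right fun hs => P.s2_notMem_F2 y (hs ▸ hq)).symm

end TwoWPM

/-- An instance of the complete and strict 2-weighted popular matching
problem has a well-formed matching iff its fs-relation graph has an orientation (each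
edge directed toward one of its endpoints) such that (a) every vertex has at most one
incoming edge, (b) every `p ∈ F1` has exactly one incoming edge from `E1`, and
(c) every `q ∈ F2` has exactly one incoming edge from `E2`. -/
theorem well_formed_iff_orientation
    {A I : Type} [Fintype A] [DecidableEq A] [Fintype I] [DecidableEq I]
    (P : TwoWPM A I) :
    P.HasWellFormed ↔
      ∃ o : A → I,
        (∀ a : A, o a = P.fEnd a ∨ o a = P.sEnd a) ∧
        Function.Injective o ∧
        (∀ p ∈ P.F1, ∃! x : A, x ∈ P.A1 ∧ o x = p) ∧
        (∀ q ∈ P.F2, ∃! y : A, y ∈ P.A2 ∧ o y = q) := by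
  constructor
  · rintro ⟨M, hinj, hA1, hA2, hF1, hF2⟩
    exact ⟨M, (P.forall_eq_endpoint_iff M).mpr ⟨hA1, hA2⟩, hinj,
      (P.covers_F1_iff hinj hA1).mp hF1, (P.covers_F2_iff hinj hA2).mp hF2⟩
  · rintro ⟨o, hends, hinj, hF1, hF2⟩
    obtain ⟨hA1, hA2⟩ := (P.forall_eq_endpoint_iff o).mp hends
    exact ⟨o, hinj, hA1, hA2, (P.covers_F1_iff hinj hA1).mpr hF1,
      (P.covers_F2_iff hinj hA2).mpr hF2⟩
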